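/- arXiv:1609.03625 — 3 statements merged into one kernel-verified Lean document; each statement's English description precedes it below -/
import Mathlib

section
/- Let Ω ⊂ ℝⁿ be an open set, let 𝒦 be a mesh of Ω of size δ = sup_{K∈𝒦} diam K, and let {(x_K, m_K, P_K)}_{K∈𝒦} ⊂ ℝⁿ × ℝ₊ × G_{d,n} with x_K ∈ K for all K. Define V^{vol}_𝒦 = Σ_{K∈𝒦} (m_K/|K|) ℒⁿ⌞K ⊗ δ_{P_K} and V^{pt}_𝒦 = Σ_{K∈𝒦} m_K δ_{x_K} ⊗ δ_{P_K}. Then for every open set U ⊂ Ω, Δ^{1,1}_U(V^{vol}_𝒦, V^{pt}_𝒦) ≤ δ · min(‖V^{vol}_𝒦‖(U^δ), ‖V^{pt}_𝒦‖(U^δ)), where U^δ is the open δ-neighborhood of U. -/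
open MeasureTheory Filter Metric Set Function
open scoped ENNReal NNReal RealInnerProductSpace Topology Pointwise

noncomputable section

namespace VarifoldPaper

abbrev Euc (n : ℕ) := EuclideanSpace ℝ (Fin n)
abbrev CLM (n : ℕ) := Euc n →L[ℝ] Euc n

def Gr (n d : ℕ) : Type :=
  {P : CLM n // LinearMap.IsSymmetric (P : Euc n →ₗ[ℝ] Euc n) ∧ P.comp P = P ∧
    Module.finrank ℝ (LinearMap.range (P : Euc n →ₗ[ℝ] Euc n)) = d}

instance (n d : ℕ) : MetricSpace (Gr n d) := by unfold Gr; infer_instance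
instance (n d : ℕ) : MeasurableSpace (Gr n d) := borel _
instance (n d : ℕ) : BorelSpace (Gr n d) := ⟨rfl⟩

def Gr.op {n d : ℕ} (P : Gr n d) : CLM n := Subtype.val P

def Gr.plane {n d : ℕ} (P : Gr n d) : Set (Euc n) :=
  (LinearMap.range ((Gr.op P : CLM n) : Euc n →ₗ[ℝ] Euc n) : Submodule ℝ (Euc n))

/-- The mass `‖V‖` of a `d`-varifold: the pushforward of `V` on the spatial factor. -/
def mass {n d : ℕ} (V : Measure (Euc n × Gr n d)) : Measure (Euc n) :=
  V.map Prod.fst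

/-- Tangential divergence `div_P X (x) = ∑ⱼ ⟨P(∇Xⱼ(x)), eⱼ⟩`. -/
def sdiv {n d : ℕ} (P : Gr n d) (X : Euc n → Euc n) (x : Euc n) : ℝ :=
  ∑ j : Fin n, EuclideanSpace.proj j (Gr.op P (gradient (fun y => EuclideanSpace.proj j (X y)) x))

/-- The first variation `δV(X) = ∫ div_S X dV` of a varifold. -/
def firstVar {n d : ℕ} (V : Measure (Euc n × Gr n d)) (X : Euc n → Euc n) : ℝ :=
  ∫ p, sdiv p.2 X p.1 ∂V

/-- The (vector-valued) first variation applied to a scalar function,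
`δV(g) = ∫ ∇^S g dV = (δV(g e₁),…,δV(g eₙ))`. -/
def firstVarScalar {n d : ℕ} (V : Measure (Euc n × Gr n d)) (g : Euc n → ℝ) : Euc n :=
  ∫ p, Gr.op p.2 (gradient g p.1) ∂V

/-- `X` is of class `C¹` with compact support. -/
def C1c {n : ℕ} (X : Euc n → Euc n) : Prop := ContDiff ℝ 1 X ∧ HasCompactSupport X

/-- Sup norm of a vector field. -/
def supNorm {n : ℕ} (X : Euc n → Euc n) : ℝ := ⨆ x, ‖X x‖

/-- `C¹` norm of a vector field. -/
def C1norm {n : ℕ} (X : Euc n → Euc n) : ℝ := (⨆ x, ‖X x‖) + ⨆ x, ‖fderiv ℝ X x‖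

/-- The rescaled radial kernel `x ↦ ε^{-n} ρ(|x|/ε)` on `ℝⁿ`. -/
def keps (n : ℕ) (ρ : ℝ → ℝ) (ε : ℝ) : Euc n → ℝ := fun x => (ε ^ n)⁻¹ * ρ (‖x‖ / ε)

/-- The regularized first variation `δV ∗ ρ_ε (x) = ∫ ∇^S ρ_ε(y-x) dV(y,S)`. -/
def regFV {n d : ℕ} (ρ : ℝ → ℝ) (ε : ℝ) (V : Measure (Euc n × Gr n d)) (x : Euc n) : Euc n :=
  ∫ p, Gr.op p.2 (gradient (keps n ρ ε) (p.1 - x)) ∂V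

/-- The regularized mass `‖V‖ ∗ ξ_ε(x)`. -/
def massConv {n d : ℕ} (ξ : ℝ → ℝ) (ε : ℝ) (V : Measure (Euc n × Gr n d)) (x : Euc n) : ℝ :=
  ∫ y, keps n ξ ε (x - y) ∂(mass V)

/-- `ω_d`, the volume of the unit ball of `ℝ^d`. -/
def ballVol (d : ℕ) : ℝ := (volume (Metric.ball (0 : Euc d) 1)).toReal

/-- The constant `C_ρ = d ω_d ∫₀¹ ρ(r) r^{d-1} dr`. -/
def Ckern (d : ℕ) (ρ : ℝ → ℝ) : ℝ := d * ballVol d * ∫ r in Ioo (0:ℝ) 1, ρ r * r ^ (d - 1)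

/-- The approximate mean curvature
`H_{ρ,ξ,ε}^V(x) = -(C_ξ/C_ρ) (δV ∗ ρ_ε(x)) / (‖V‖ ∗ ξ_ε(x))`. -/
def AMC {n d : ℕ} (ρ ξ : ℝ → ℝ) (ε : ℝ) (V : Measure (Euc n × Gr n d)) (x : Euc n) : Euc n :=
  ((-(Ckern d ξ / Ckern d ρ)) / massConv ξ ε V x) • regFV ρ ε V x

/-- Average of the projections `Π_{P^⊥} v` with respect to a measure `ν` on the Grassmannian. -/
def perpAvg {n d : ℕ} (ν : Measure (Gr n d)) (v : Euc n) : Euc n :=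
  ∫ P, (v - Gr.op P v) ∂ν

/-- Orthogonal approximate mean curvature, for a varifold with disintegration `ν`. -/
def AMCperpOf {n d : ℕ} (ν : Euc n → Measure (Gr n d)) (ρ ξ : ℝ → ℝ) (ε : ℝ)
    (V : Measure (Euc n × Gr n d)) (x : Euc n) : Euc n :=
  perpAvg (ν x) (AMC ρ ξ ε V x)

/-- Orthogonal approximate mean curvature of a rectifiable varifold with tangent map `tg`
(whose disintegration is `ν_x = δ_{tg x}`). -/
def AMCperpRect {n d : ℕ} (tg : Euc n → Gr n d) (ρ ξ : ℝ → ℝ) (ε : ℝ)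
    (V : Measure (Euc n × Gr n d)) (x : Euc n) : Euc n :=
  AMC ρ ξ ε V x - Gr.op (tg x) (AMC ρ ξ ε V x)

/-- Localized bounded Lipschitz distance `Δ^{1,1}_U` between two varifolds. -/
def BL {n d : ℕ} (U : Set (Euc n)) (V W : Measure (Euc n × Gr n d)) : ℝ :=
  sSup {r : ℝ | ∃ φ : Euc n × Gr n d → ℝ, LipschitzWith 1 φ ∧ (∀ p, |φ p| ≤ 1) ∧
    tsupport φ ⊆ U ×ˢ (univ : Set (Gr n d)) ∧ r = |(∫ p, φ p ∂V) - ∫ p, φ p ∂W|}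

/-- Localized bounded Lipschitz distance `Δ^{1,1}_U` between two measures on `ℝⁿ`. -/
def BLm {n : ℕ} (U : Set (Euc n)) (μ ν : Measure (Euc n)) : ℝ :=
  sSup {r : ℝ | ∃ φ : Euc n → ℝ, LipschitzWith 1 φ ∧ (∀ x, |φ x| ≤ 1) ∧
    tsupport φ ⊆ U ∧ r = |(∫ x, φ x ∂μ) - ∫ x, φ x ∂ν|}

/-- Support of a measure. -/
def msupp {n : ℕ} (μ : Measure (Euc n)) : Set (Euc n) :=
  {x | ∀ r : ℝ, 0 < r → μ (Metric.ball x r) ≠ 0}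

/-- The `W^{1,∞}` norm of a (Lipschitz) profile. -/
def W1norm (ξ : ℝ → ℝ) : ℝ :=
  (⨆ s, |ξ s|) + sInf {L : ℝ | 0 ≤ L ∧ LipschitzWith (Real.toNNReal L) ξ}

/-- The `W^{2,∞}` norm of a (`C^{1,1}`) profile. -/
def W2norm (ρ : ℝ → ℝ) : ℝ :=
  (⨆ s, |ρ s|) + (⨆ s, |deriv ρ s|) +
    sInf {L : ℝ | 0 ≤ L ∧ LipschitzWith (Real.toNNReal L) (deriv ρ)}

/-- A kernel profile as in the paper: even, non-negative, supported in `[-1,1]`, with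
`∫_{ℝⁿ} ρ(|x|) dx = 1`. -/
structure IsProfile (n : ℕ) (ρ : ℝ → ℝ) : Prop where
  nonneg : ∀ s, 0 ≤ ρ s
  even : ∀ s, ρ (-s) = ρ s
  compact_supp : ∀ s : ℝ, 1 ≤ |s| → ρ s = 0
  normalized : ∫ x : Euc n, ρ ‖x‖ = 1

/-- Hypothesis 4.1 of the paper: kernel profiles with `ρ ∈ W^{2,∞}` (i.e. `C¹` with Lipschitz
derivative) and `ξ ∈ W^{1,∞}` (i.e. Lipschitz). -/
def Hyp41 (n : ℕ) (ρ ξ : ℝ → ℝ) : Prop :=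
  IsProfile n ρ ∧ IsProfile n ξ ∧ ContDiff ℝ 1 ρ ∧
    (∃ L : ℝ≥0, LipschitzWith L (deriv ρ)) ∧ ∃ L : ℝ≥0, LipschitzWith L ξ

/-- `V` has bounded first variation: `δV` extends to a bounded vector-valued Radon measure,
equivalently `δV` is bounded w.r.t. the sup norm. -/
def BoundedFV {n d : ℕ} (V : Measure (Euc n × Gr n d)) : Prop :=
  ∃ C : ℝ, ∀ X : Euc n → Euc n, C1c X → |firstVar V X| ≤ C * supNorm X

/-- `V` has locally bounded first variation. -/
def LocBoundedFV {n d : ℕ} (V : Measure (Euc n × Gr n d)) : Prop :=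
  ∀ Kc : Set (Euc n), IsCompact Kc → ∃ C : ℝ, ∀ X : Euc n → Euc n, C1c X →
    tsupport X ⊆ Kc → |firstVar V X| ≤ C * supNorm X

/-- `H` is the generalized mean curvature of `V`: `δV = -H ‖V‖ + δV_s` with
`δV_s = g σ` singular with respect to `‖V‖`. -/
def HasGMC {n d : ℕ} (V : Measure (Euc n × Gr n d)) (H : Euc n → Euc n) : Prop :=
  LocallyIntegrable H (mass V) ∧
  ∃ (σ : Measure (Euc n)) (g : Euc n → Euc n), σ.MutuallySingular (mass V) ∧
    IsLocallyFiniteMeasure σ ∧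
    ∀ X : Euc n → Euc n, C1c X →
      firstVar V X = -(∫ x, ⟪X x, H x⟫ ∂(mass V)) + ∫ x, ⟪X x, g x⟫ ∂σ

/-- `M ⊆ ℝⁿ` is countably `d`-rectifiable: up to an `𝓗^d`-null set, `M` is covered by countably
many Lipschitz images of subsets of `ℝ^d`. -/
def CountablyRectifiable (n d : ℕ) (M : Set (Euc n)) : Prop :=
  ∃ (f : ℕ → (EuclideanSpace ℝ (Fin d) → Euc n)) (s : ℕ → Set (EuclideanSpace ℝ (Fin d)))
    (L : ℕ → ℝ≥0), (∀ i, LipschitzOnWith (L i) (f i) (s i)) ∧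
      (μH[(d : ℝ)] : Measure (Euc n)) (M \ ⋃ i, f i '' s i) = 0

/-- `T` is the approximate tangent plane of `μ` at `x` with multiplicity `θx`: the blow-ups of
`μ` at `x` converge weakly-∗ to `θx 𝓗^d ⌞ T`. -/
def ApproxTangentAt {n d : ℕ} (μ : Measure (Euc n)) (x : Euc n) (θx : ℝ) (T : Gr n d) : Prop :=
  ∀ φ : Euc n → ℝ, Continuous φ → HasCompactSupport φ →
    Tendsto (fun ε : ℝ => (ε ^ d)⁻¹ * ∫ y, φ (ε⁻¹ • (y - x)) ∂μ) (𝓝[>] (0:ℝ))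
      (𝓝 (θx * ∫ y in Gr.plane T, φ y ∂(μH[(d : ℝ)] : Measure (Euc n))))

/-- `V` is the rectifiable `d`-varifold `v(M,θ)` with tangent map `tg`. -/
def IsRectVarifold {n d : ℕ} (V : Measure (Euc n × Gr n d)) (M : Set (Euc n))
    (θ : Euc n → ℝ) (tg : Euc n → Gr n d) : Prop :=
  Measurable θ ∧ Measurable tg ∧ CountablyRectifiable n d M ∧
  (∀ᵐ x ∂((μH[(d : ℝ)] : Measure (Euc n)).restrict M), 0 < θ x) ∧
  (∀ᵐ x ∂((μH[(d : ℝ)] : Measure (Euc n)).restrict M), ApproxTangentAt (mass V) x (θ x) (tg x)) ∧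
  V = ((((μH[(d : ℝ)] : Measure (Euc n)).restrict M).withDensity
        (fun x => ENNReal.ofReal (θ x))).map (fun x => (x, tg x)))

/-- `W` is a point cloud varifold subordinate to the mesh `K`. -/
def IsPointCloudOn {n d : ℕ} {ι : Type} (K : ι → Set (Euc n))
    (W : Measure (Euc n × Gr n d)) : Prop :=
  ∃ (m : ι → ℝ≥0) (xp : ι → Euc n) (P : ι → Gr n d),
    (∀ k, (K k).Nonempty → xp k ∈ K k) ∧ (∀ k, K k = ∅ → m k = 0) ∧
    W = Measure.sum (fun k => (m k : ℝ≥0∞) • Measure.dirac (xp k, P k))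

/-- `W` is a discrete volumetric varifold subordinate to the mesh `K`. -/
def IsVolumetricOn {n d : ℕ} {ι : Type} (K : ι → Set (Euc n))
    (W : Measure (Euc n × Gr n d)) : Prop :=
  ∃ (m : ι → ℝ≥0) (P : ι → Gr n d),
    W = Measure.sum (fun k =>
      ((m k : ℝ≥0∞) / volume (K k)) • ((volume.restrict (K k)).map (fun x => (x, P k))))

/-- Cotangent of the angle between two vectors. -/
def myCot (u v : Euc 3) : ℝ :=
  ⟪u, v⟫ / Real.sqrt (‖u‖ ^ 2 * ‖v‖ ^ 2 - ⟪u, v⟫ ^ 2)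

/-!
On a single cell `K` with point `x` and plane `P`, the two varifolds differ on a test function
`φ` by `(m/|K|) ∫_K (φ(y,P) - φ(x,P)) dy`. The integrand is at most `δ` because `φ` is
`1`-Lipschitz and `diam K ≤ δ`; it vanishes unless both `y` and `x` lie in `U^δ`, since a point
where `φ ≠ 0` carries a ball of radius `|φ|` inside `U`, so every point within `δ` of it lies
strictly within `δ` of `U`. Bounding by the indicator of `U^δ` at `y` gives `δ ‖V^vol‖(K ∩ U^δ)`,
at `x` it gives `δ m 1_{U^δ}(x)`, and summing over the cells gives both bounds. The same
argument bounds `∫ |φ|` cell by cell, which makes `φ` integrable for both varifolds whenever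
the right-hand side is finite. When `δ ≤ 0` every cell is a single point and the varifolds agree.
-/

lemma ball_abs_subset_of_lipschitzWith_one {X : Type*} [PseudoMetricSpace X] {f : X → ℝ}
    {U : Set X} (hf : LipschitzWith 1 f) (hU : tsupport f ⊆ U) (z : X) : ball z |f z| ⊆ U := by
  intro w hw
  by_contra hwU
  have hw0 : f w = 0 := image_eq_zero_of_notMem_tsupport fun h => hwU (hU h)
  have := hf.dist_le_mul z w
  rw [Real.dist_eq, hw0, sub_zero, NNReal.coe_one, one_mul, dist_comm] at this
  exact (mem_ball.mp hw).not_ge this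

section Thickening

variable {E : Type*} [NormedAddCommGroup E] [NormedSpace ℝ E]
  {f : E → ℝ} {U : Set E} {δ : ℝ} {y z : E}

lemma mem_thickening_of_ne_zero (hf : LipschitzWith 1 f) (hU : tsupport f ⊆ U) (hδ : 0 < δ)
    (hyz : dist y z ≤ δ) (hz : f z ≠ 0) : y ∈ thickening δ U := by
  have hball : ball z (δ + |f z|) ⊆ thickening δ U := by
    rw [← thickening_ball hδ (abs_pos.mpr hz)]
    exact thickening_subset_of_subset δ (ball_abs_subset_of_lipschitzWith_one hf hU z)
  exact hball (mem_ball.mpr (by have := abs_pos.mpr hz; linarith))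

lemma enorm_le_indicator_thickening (hf : LipschitzWith 1 f) (hU : tsupport f ⊆ U)
    (hf1 : ∀ w, |f w| ≤ 1) (hδ : 0 < δ) (hyz : dist y z ≤ δ) :
    ‖f z‖ₑ ≤ (thickening δ U).indicator (fun _ => 1) y := by
  by_cases hz : f z = 0
  · simp [hz]
  rw [indicator_of_mem (mem_thickening_of_ne_zero hf hU hδ hyz hz), Real.enorm_eq_ofReal_abs]
  exact ENNReal.ofReal_le_one.mpr (hf1 z)

lemma enorm_sub_le_indicator_thickening (hf : LipschitzWith 1 f) (hU : tsupport f ⊆ U)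
    (hδ : 0 < δ) (hyz : dist y z ≤ δ) :
    ‖f y - f z‖ₑ ≤ (thickening δ U).indicator (fun _ => ENNReal.ofReal δ) y := by
  by_cases hy : y ∈ thickening δ U
  · rw [indicator_of_mem hy, ← edist_eq_enorm_sub]
    calc edist (f y) (f z) ≤ edist y z := by simpa using hf.edist_le_mul y z
      _ ≤ ENNReal.ofReal δ := (edist_le_ofReal hδ.le).mpr hyz
  · have hfy : f y = 0 :=
      image_eq_zero_of_notMem_tsupport fun h => hy (self_subset_thickening hδ U (hU h))
    have hfz : f z = 0 := by
      by_contra hz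
      exact hy (mem_thickening_of_ne_zero hf hU hδ hyz hz)
    simp [hfy, hfz]

end Thickening

section Slices

variable {E G : Type*} [PseudoMetricSpace E] [PseudoMetricSpace G] {φ : E × G → ℝ}

lemma lipschitzWith_slice (hφ : LipschitzWith 1 φ) (P : G) :
    LipschitzWith 1 fun y => φ (y, P) := by
  simpa [Function.comp_def] using hφ.comp (LipschitzWith.prodMk_right P)

lemma tsupport_slice_subset {U : Set E}
    (hsupp : tsupport φ ⊆ U ×ˢ univ) (P : G) : tsupport (fun y => φ (y, P)) ⊆ U :=
  fun _ hy => (hsupp (tsupport_comp_subset_preimage (f := fun y => (y, P)) φ (by fun_prop) hy)).1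

end Slices

section Cells

variable {E G : Type*} [MeasurableSpace E] [MeasurableSpace G]

/-- `(m / μ K) μ⌞K ⊗ δ_P`, the summand of `V^vol` carried by the cell `K`. -/
def volCell (μ : Measure E) (K : Set E) (m : ℝ≥0) (P : G) : Measure (E × G) :=
  ((m : ℝ≥0∞) / μ K) • (μ.restrict K).map (fun y => (y, P))

/-- `m δ_x ⊗ δ_P`, the summand of `V^pt` carried by the cell `K ∋ x`. -/
def ptCell (m : ℝ≥0) (x : E) (P : G) : Measure (E × G) :=
  (m : ℝ≥0∞) • Measure.dirac (x, P)

variable {μ : Measure E} {K T : Set E} {m : ℝ≥0} {x : E} {P : G} {δ : ℝ}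

lemma volCell_fst_preimage (hT : MeasurableSet T) :
    volCell μ K m P (Prod.fst ⁻¹' T) = m / μ K * μ (T ∩ K) := by
  rw [volCell, Measure.smul_apply, Measure.map_apply measurable_prodMk_right
    (measurable_fst hT), smul_eq_mul]
  exact congrArg _ (Measure.restrict_apply hT)

lemma ptCell_fst_preimage (hT : MeasurableSet T) :
    ptCell m x P (Prod.fst ⁻¹' T) = T.indicator (fun _ => (m : ℝ≥0∞)) x := by
  by_cases hx : x ∈ T <;>
  simp [ptCell, Measure.dirac_apply' _ (measurable_fst hT), hx]

lemma lintegral_volCell {g : E × G → ℝ≥0∞} (hg : Measurable g) :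
    ∫⁻ p, g p ∂volCell μ K m P = m / μ K * ∫⁻ y in K, g (y, P) ∂μ := by
  rw [volCell, lintegral_smul_measure, lintegral_map hg measurable_prodMk_right, smul_eq_mul]

lemma lintegral_ptCell {g : E × G → ℝ≥0∞} (hg : Measurable g) :
    ∫⁻ p, g p ∂ptCell m x P = m * g (x, P) := by
  rw [ptCell, lintegral_smul_measure, lintegral_dirac' _ hg, smul_eq_mul]

lemma volCell_singleton [MeasurableSingletonClass E] (h0 : μ {x} ≠ 0) (htop : μ {x} ≠ ⊤) :
    volCell μ {x} m P = ptCell m x P := by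
  rw [volCell, ptCell, Measure.restrict_singleton, Measure.map_smul,
    Measure.map_dirac' measurable_prodMk_right, smul_smul, ENNReal.div_mul_cancel h0 htop]

lemma mul_setLIntegral_le_min_cell [PseudoMetricSpace E] [OpensMeasurableSpace E]
    {F : E → ℝ≥0∞} {a : ℝ≥0∞} (hK : K ⊆ closedBall x δ) (hK0 : μ K ≠ 0) (hKtop : μ K ≠ ⊤)
    (hT : MeasurableSet T)
    (hFy : ∀ y, dist y x ≤ δ → F y ≤ T.indicator (fun _ => a) y)
    (hFx : ∀ y, dist y x ≤ δ → F y ≤ T.indicator (fun _ => a) x) :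
    m / μ K * ∫⁻ y in K, F y ∂μ ≤
      a * min (volCell μ K m P (Prod.fst ⁻¹' T)) (ptCell m x P (Prod.fst ⁻¹' T)) := by
  have hball : ∀ᵐ y ∂μ.restrict K, dist y x ≤ δ :=
    ae_restrict_of_ae_restrict_of_subset hK (ae_restrict_mem measurableSet_closedBall)
  rw [volCell_fst_preimage hT, ptCell_fst_preimage hT, mul_min_of_nonneg _ _ bot_le]
  refine le_min ?_ ?_
  · calc m / μ K * ∫⁻ y in K, F y ∂μ
        ≤ m / μ K * ∫⁻ y in K, T.indicator (fun _ => a) y ∂μ :=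
          mul_le_mul_right (lintegral_mono_ae (hball.mono hFy)) _
      _ = a * (m / μ K * μ (T ∩ K)) := by
          rw [lintegral_indicator_const hT, Measure.restrict_apply hT, mul_left_comm]
  · calc m / μ K * ∫⁻ y in K, F y ∂μ
        ≤ m / μ K * ∫⁻ _ in K, T.indicator (fun _ => a) x ∂μ :=
          mul_le_mul_right (lintegral_mono_ae (hball.mono hFx)) _
      _ = T.indicator (fun _ => a) x * m := by
          rw [setLIntegral_const, mul_comm, mul_assoc, ENNReal.mul_div_cancel hK0 hKtop]
      _ = a * T.indicator (fun _ => (m : ℝ≥0∞)) x := by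
          by_cases hx : x ∈ T <;> simp [hx]

end Cells

section CellEstimates

variable {E G : Type*} [NormedAddCommGroup E] [MeasurableSpace E]
  [BorelSpace E] [PseudoMetricSpace G] [MeasurableSpace G] [OpensMeasurableSpace (E × G)]
  {μ : Measure E} {K U : Set E} {m : ℝ≥0} {x : E} {P : G} {δ : ℝ} {φ : E × G → ℝ}

lemma lintegral_enorm_volCell_le [NormedSpace ℝ E] (hφ : LipschitzWith 1 φ) (hφ1 : ∀ p, |φ p| ≤ 1)
    (hsupp : tsupport φ ⊆ U ×ˢ univ) (hδ : 0 < δ) (hK : K ⊆ closedBall x δ) (hK0 : μ K ≠ 0)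
    (hKtop : μ K ≠ ⊤) :
    ∫⁻ p, ‖φ p‖ₑ ∂volCell μ K m P ≤ min (volCell μ K m P (Prod.fst ⁻¹' thickening δ U))
      (ptCell m x P (Prod.fst ⁻¹' thickening δ U)) := by
  have hf := lipschitzWith_slice hφ P
  have hfU := tsupport_slice_subset hsupp P
  rw [lintegral_volCell hφ.continuous.measurable.enorm]
  simpa using mul_setLIntegral_le_min_cell (a := 1) hK hK0 hKtop
    isOpen_thickening.measurableSet
    (fun y _ => enorm_le_indicator_thickening hf hfU (fun _ => hφ1 _) hδ
      ((dist_self y).trans_le hδ.le))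
    (fun y hy => enorm_le_indicator_thickening hf hfU (fun _ => hφ1 _) hδ
      ((dist_comm x y).trans_le hy))

lemma lintegral_enorm_ptCell_le [NormedSpace ℝ E] (hφ : LipschitzWith 1 φ) (hφ1 : ∀ p, |φ p| ≤ 1)
    (hsupp : tsupport φ ⊆ U ×ˢ univ) (hδ : 0 < δ) (hK : K ⊆ closedBall x δ) (hK0 : μ K ≠ 0)
    (hKtop : μ K ≠ ⊤) :
    ∫⁻ p, ‖φ p‖ₑ ∂ptCell m x P ≤ min (volCell μ K m P (Prod.fst ⁻¹' thickening δ U))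
      (ptCell m x P (Prod.fst ⁻¹' thickening δ U)) := by
  have hf := lipschitzWith_slice hφ P
  have hfU := tsupport_slice_subset hsupp P
  have hconst : (m : ℝ≥0∞) * ‖φ (x, P)‖ₑ = m / μ K * ∫⁻ _ in K, ‖φ (x, P)‖ₑ ∂μ := by
    rw [setLIntegral_const, mul_comm ‖_‖ₑ, ← mul_assoc, ENNReal.div_mul_cancel hK0 hKtop]
  rw [lintegral_ptCell hφ.continuous.measurable.enorm, hconst]
  simpa using mul_setLIntegral_le_min_cell (a := 1) hK hK0 hKtop
    isOpen_thickening.measurableSet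
    (fun _ hy => enorm_le_indicator_thickening hf hfU (fun _ => hφ1 _) hδ hy)
    (fun _ _ => enorm_le_indicator_thickening hf hfU (fun _ => hφ1 _) hδ
      ((dist_self x).trans_le hδ.le))

lemma integral_volCell_sub_integral_ptCell (hφ : LipschitzWith 1 φ) (hφ1 : ∀ p, |φ p| ≤ 1)
    (hK0 : μ K ≠ 0) (hKtop : μ K ≠ ⊤) :
    (∫ p, φ p ∂volCell μ K m P) - ∫ p, φ p ∂ptCell m x P =
      (m / μ K).toReal * ∫ y in K, (φ (y, P) - φ (x, P)) ∂μ := by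
  have : IsFiniteMeasure (μ.restrict K) := isFiniteMeasure_restrict.mpr hKtop
  have hint : Integrable (fun y => φ (y, P)) (μ.restrict K) :=
    .of_bound (lipschitzWith_slice hφ P).continuous.aestronglyMeasurable 1
      (ae_of_all _ fun y => hφ1 (y, P))
  have hm : (m : ℝ) = (m / μ K).toReal * μ.real K := by
    rw [measureReal_def, ← ENNReal.toReal_mul, ENNReal.div_mul_cancel hK0 hKtop,
      ENNReal.coe_toReal]
  rw [volCell, ptCell, integral_smul_measure, integral_smul_measure,
    integral_map measurable_prodMk_right.aemeasurable hφ.continuous.aestronglyMeasurable,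
    integral_dirac' _ _ hφ.continuous.stronglyMeasurable, integral_sub hint (integrable_const _),
    setIntegral_const, ENNReal.coe_toReal, hm]
  simp only [smul_eq_mul]
  ring

lemma enorm_integral_volCell_sub_ptCell_le [NormedSpace ℝ E] (hφ : LipschitzWith 1 φ)
    (hφ1 : ∀ p, |φ p| ≤ 1) (hsupp : tsupport φ ⊆ U ×ˢ univ) (hδ : 0 < δ)
    (hK : K ⊆ closedBall x δ) (hK0 : μ K ≠ 0) (hKtop : μ K ≠ ⊤) :
    ‖(∫ p, φ p ∂volCell μ K m P) - ∫ p, φ p ∂ptCell m x P‖ₑ ≤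
      ENNReal.ofReal δ * min (volCell μ K m P (Prod.fst ⁻¹' thickening δ U))
        (ptCell m x P (Prod.fst ⁻¹' thickening δ U)) := by
  have hf := lipschitzWith_slice hφ P
  have hfU := tsupport_slice_subset hsupp P
  rw [integral_volCell_sub_integral_ptCell hφ hφ1 hK0 hKtop, enorm_mul,
    Real.enorm_toReal (ENNReal.div_ne_top ENNReal.coe_ne_top hK0)]
  calc _ ≤ m / μ K * ∫⁻ y in K, ‖φ (y, P) - φ (x, P)‖ₑ ∂μ :=
        mul_le_mul_right (enorm_integral_le_lintegral_enorm _) _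
    _ ≤ _ := mul_setLIntegral_le_min_cell hK hK0 hKtop isOpen_thickening.measurableSet
        (fun _ hy => enorm_sub_le_indicator_thickening hf hfU hδ hy)
        (fun y hy => enorm_sub_rev (φ (y, P)) _ ▸
          enorm_sub_le_indicator_thickening hf hfU hδ ((dist_comm x y).trans_le hy))

end CellEstimates

lemma enorm_integral_sum_sub_le {α ι : Type*} [MeasurableSpace α] {μ ν : ι → Measure α}
    {φ : α → ℝ} (hφ : StronglyMeasurable φ) {b : ι → ℝ≥0∞} {c : ℝ≥0∞} (hc : c ≠ 0)
    (hμ : ∀ k, ∫⁻ p, ‖φ p‖ₑ ∂μ k ≤ b k) (hν : ∀ k, ∫⁻ p, ‖φ p‖ₑ ∂ν k ≤ b k)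
    (h : ∀ k, ‖(∫ p, φ p ∂μ k) - ∫ p, φ p ∂ν k‖ₑ ≤ c * b k) :
    ‖(∫ p, φ p ∂Measure.sum μ) - ∫ p, φ p ∂Measure.sum ν‖ₑ ≤ c * ∑' k, b k := by
  rcases eq_or_ne (∑' k, b k) ⊤ with hb | hb
  · simp [hb, ENNReal.mul_top hc]
  have integrable {ρ : ι → Measure α} (hρ : ∀ k, ∫⁻ p, ‖φ p‖ₑ ∂ρ k ≤ b k) :
      Integrable φ (Measure.sum ρ) := by
    refine ⟨hφ.aestronglyMeasurable, ?_⟩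
    rw [HasFiniteIntegral, lintegral_sum_measure]
    exact (ENNReal.tsum_le_tsum hρ).trans_lt hb.lt_top
  have hsum := (hasSum_integral_measure (integrable hμ)).sub
    (hasSum_integral_measure (integrable hν))
  calc _ ≤ ∑' k, ‖(∫ p, φ p ∂μ k) - ∫ p, φ p ∂ν k‖ₑ :=
        hsum.tsum_eq ▸ enorm_tsum_le_tsum_enorm
    _ ≤ ∑' k, c * b k := ENNReal.tsum_le_tsum h
    _ = c * ∑' k, b k := ENNReal.tsum_mul_left

theorem enorm_integral_volumetric_sub_pointCloud_le {E G ι : Type*} [NormedAddCommGroup E]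
    [NormedSpace ℝ E] [MeasurableSpace E] [BorelSpace E] [PseudoMetricSpace G] [MeasurableSpace G]
    [OpensMeasurableSpace (E × G)] {μ : Measure E} {K : ι → Set E} {x : ι → E} {m : ι → ℝ≥0}
    {P : ι → G} {δ : ℝ} {U : Set E} {φ : E × G → ℝ}
    (hK : ∀ k, K k ⊆ closedEBall (x k) (ENNReal.ofReal δ)) (hK0 : ∀ k, μ (K k) ≠ 0)
    (hKtop : ∀ k, μ (K k) ≠ ⊤) (hφ : LipschitzWith 1 φ) (hφ1 : ∀ p, |φ p| ≤ 1)
    (hsupp : tsupport φ ⊆ U ×ˢ univ) :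
    ‖(∫ p, φ p ∂Measure.sum fun k => volCell μ (K k) (m k) (P k)) -
        ∫ p, φ p ∂Measure.sum fun k => ptCell (m k) (x k) (P k)‖ₑ ≤
      ENNReal.ofReal δ *
        min (Measure.sum (fun k => volCell μ (K k) (m k) (P k)) (Prod.fst ⁻¹' thickening δ U))
          (Measure.sum (fun k => ptCell (m k) (x k) (P k)) (Prod.fst ⁻¹' thickening δ U)) := by
  rcases le_or_gt δ 0 with hδ | hδ
  · have hcell : ∀ k, volCell μ (K k) (m k) (P k) = ptCell (m k) (x k) (P k) := by
      intro k
      have hKx : K k = {x k} := (nonempty_of_measure_ne_zero (hK0 k)).subset_singleton_iff.mp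
        (by simpa [ENNReal.ofReal_of_nonpos hδ] using hK k)
      exact hKx ▸ volCell_singleton (hKx ▸ hK0 k) (hKx ▸ hKtop k)
    simp [hcell]
  have hKball : ∀ k, K k ⊆ closedBall (x k) δ := fun k => by
    simpa only [closedEBall_ofReal hδ.le] using hK k
  have hA : MeasurableSet (Prod.fst ⁻¹' thickening δ U : Set (E × G)) :=
    measurable_fst isOpen_thickening.measurableSet
  rw [Measure.sum_apply _ hA, Measure.sum_apply _ hA]
  calc _ ≤ ENNReal.ofReal δ * ∑' k, min (volCell μ (K k) (m k) (P k) (Prod.fst ⁻¹' thickening δ U))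
          (ptCell (m k) (x k) (P k) (Prod.fst ⁻¹' thickening δ U)) :=
        enorm_integral_sum_sub_le hφ.continuous.stronglyMeasurable (ENNReal.ofReal_pos.mpr hδ).ne'
          (fun k => lintegral_enorm_volCell_le hφ hφ1 hsupp hδ (hKball k) (hK0 k) (hKtop k))
          (fun k => lintegral_enorm_ptCell_le hφ hφ1 hsupp hδ (hKball k) (hK0 k) (hKtop k))
          (fun k => enorm_integral_volCell_sub_ptCell_le hφ hφ1 hsupp hδ (hKball k) (hK0 k)
            (hKtop k))
    _ ≤ _ := by
        gcongr
        exact le_min (ENNReal.tsum_le_tsum fun _ => min_le_left _ _)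
          (ENNReal.tsum_le_tsum fun _ => min_le_right _ _)

lemma ofReal_sSup_le {S : Set ℝ} {b : ℝ≥0∞} (h : ∀ r ∈ S, ENNReal.ofReal r ≤ b) :
    ENNReal.ofReal (sSup S) ≤ b := by
  rcases eq_or_ne b ⊤ with rfl | hb
  · exact le_top
  rw [← ENNReal.ofReal_toReal hb]
  exact ENNReal.ofReal_le_ofReal <| Real.sSup_le
    (fun r hr => (ENNReal.ofReal_le_iff_le_toReal hb).mp (h r hr)) ENNReal.toReal_nonneg

theorem statement_0_general {n d : ℕ} {ι : Type} (K : ι → Set (Euc n))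
    (δ : ℝ) (hδ : ∀ k, EMetric.diam (K k) ≤ ENNReal.ofReal δ)
    (x : ι → Euc n) (m : ι → ℝ≥0) (P : ι → Gr n d)
    (hx : ∀ k, x k ∈ K k) (hvol : ∀ k, 0 < volume (K k))
    (U : Set (Euc n)) :
    ENNReal.ofReal (BL U
        (Measure.sum fun k =>
          ((m k : ℝ≥0∞) / volume (K k)) • ((volume.restrict (K k)).map (fun y => (y, P k))))
        (Measure.sum fun k => (m k : ℝ≥0∞) • Measure.dirac (x k, P k)))
      ≤ ENNReal.ofReal δ *
        min
          (mass (Measure.sum fun k =>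
              ((m k : ℝ≥0∞) / volume (K k)) • ((volume.restrict (K k)).map (fun y => (y, P k))))
            (Metric.thickening δ U))
          (mass (Measure.sum fun k => (m k : ℝ≥0∞) • Measure.dirac (x k, P k))
            (Metric.thickening δ U)) := by
  have hT : MeasurableSet (thickening δ U) := isOpen_thickening.measurableSet
  have hKtop : ∀ k, volume (K k) ≠ ⊤ := fun k =>
    (isBounded_iff_ediam_ne_top.mpr (ne_top_of_le_ne_top ENNReal.ofReal_ne_top (hδ k)))
      |>.measure_lt_top.ne
  refine ofReal_sSup_le ?_
  rintro _ ⟨φ, hφ, hφ1, hsupp, rfl⟩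
  rw [← Real.enorm_eq_ofReal_abs, mass, mass, Measure.map_apply measurable_fst hT,
    Measure.map_apply measurable_fst hT]
  exact enorm_integral_volumetric_sub_pointCloud_le
    (fun k _ hy => edist_le_of_ediam_le hy (hx k) (hδ k)) (fun k => (hvol k).ne') hKtop
    hφ hφ1 hsupp

/-- Proposition `prop_comparison_volumetric_point_cloud`.
Comparison between the discrete volumetric varifold and the point cloud varifold built on the
same mesh: `Δ^{1,1}_U(V^{vol}, V^{pt}) ≤ δ · min(‖V^{vol}‖(U^δ), ‖V^{pt}‖(U^δ))`. -/
theorem statement_0 {n d : ℕ} (hd : 1 ≤ d) (hdn : d < n)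
    (Ω : Set (Euc n)) (hΩ : IsOpen Ω)
    {ι : Type} [Countable ι] (K : ι → Set (Euc n))
    (hdisj : Pairwise (Function.onFun Disjoint K))
    (hcover : ⋃ k, K k = Ω)
    (hlocfin : ∀ B : Set (Euc n), Bornology.IsBounded B → {k : ι | (K k ∩ B).Nonempty}.Finite)
    (δ : ℝ) (hδ : ∀ k, EMetric.diam (K k) ≤ ENNReal.ofReal δ)
    (x : ι → Euc n) (m : ι → ℝ≥0) (P : ι → Gr n d)
    (hx : ∀ k, x k ∈ K k) (hvol : ∀ k, 0 < volume (K k))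
    (U : Set (Euc n)) (hU : IsOpen U) (hUΩ : U ⊆ Ω) :
    ENNReal.ofReal (BL U
        (Measure.sum fun k =>
          ((m k : ℝ≥0∞) / volume (K k)) • ((volume.restrict (K k)).map (fun y => (y, P k))))
        (Measure.sum fun k => (m k : ℝ≥0∞) • Measure.dirac (x k, P k)))
      ≤ ENNReal.ofReal δ *
        min
          (mass (Measure.sum fun k =>
              ((m k : ℝ≥0∞) / volume (K k)) • ((volume.restrict (K k)).map (fun y => (y, P k))))
            (Metric.thickening δ U))
          (mass (Measure.sum fun k => (m k : ℝ≥0∞) • Measure.dirac (x k, P k))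
            (Metric.thickening δ U)) :=
  statement_0_general K δ hδ x m P hx hvol U

end VarifoldPaper
end
end

section
/- Let Ω ⊂ ℝⁿ be an open set and let V be a d-varifold in Ω with finite mass ‖V‖(Ω) < ∞. Then the regularized first variation δV ∗ ρ_ε, defined by δV ∗ ρ_ε(X) := δV(X ∗ ρ_ε) for X ∈ C¹_c(ℝⁿ, ℝⁿ), is represented by the continuous vector field x ↦ ∫_{Ω×G_{d,n}} ∇^S ρ_ε(y − x) dV(y,S) = ε^{−(n+1)} ∫_{Ω×G_{d,n}} ∇^S ρ₁((y−x)/ε) dV(y,S), i.e. δV ∗ ρ_ε(X) = ∫_{ℝⁿ} X(x) · (δV ∗ ρ_ε)(x) dx for all X ∈ C¹_c(ℝⁿ, ℝⁿ); moreover this vector field belongs to L¹(ℝⁿ; ℝⁿ). -/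
open MeasureTheory Filter Metric Set Function
open scoped ENNReal NNReal RealInnerProductSpace Topology Pointwise

noncomputable section

/-!
Differentiating under the integral sign, the `j`-th component of `X ∗ ρ_ε` has gradient
`∫ X_j(z) ∇ρ_ε(y - z) dz`, so `div_S (X ∗ ρ_ε)(y) = ∫ ⟨X(z), S ∇ρ_ε(y - z)⟩ dz`. Integrating
against `V` and exchanging the order of integration (the integrand is bounded by
`sup |∇ρ_ε| · |X(z)|`) gives the representation. Since `|S v| ≤ |v|`, the field is continuous by
dominated convergence, and it is integrable because the shear `(y, S, x) ↦ (y, S, y - x)`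
preserves `V ⊗ dx`, so `∫∫ |∇ρ_ε(y - x)| dx dV = V(ℝⁿ × G) ‖∇ρ_ε‖_{L¹}`.
That `ρ_ε` is `C¹` at all needs `ρ` even: then `ρ'(0) = 0`, which makes `x ↦ ρ(|x|)`
differentiable at the origin, where the norm is not.
-/

section Radial

variable {E : Type*} [NormedAddCommGroup E] [InnerProductSpace ℝ E] {ρ : ℝ → ℝ}

theorem Function.Even.deriv_zero (hρ : ρ.Even) : deriv ρ 0 = 0 := by
  have h := deriv_comp_neg (f := ρ) (x := 0)
  simp only [hρ _, neg_zero] at h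
  linarith

theorem hasFDerivAt_comp_norm_zero (hρ : DifferentiableAt ℝ ρ 0) (he : ρ.Even) :
    HasFDerivAt (fun x : E => ρ ‖x‖) (0 : E →L[ℝ] ℝ) 0 := by
  have hd : HasDerivAt ρ 0 0 := by simpa [he.deriv_zero] using hρ.hasDerivAt
  have h := (hasDerivAt_iff_isLittleO_nhds_zero.1 hd).comp_tendsto
    (continuous_norm.tendsto' (0 : E) 0 norm_zero)
  rw [hasFDerivAt_iff_isLittleO_nhds_zero, ← Asymptotics.isLittleO_norm_right]
  simpa [Function.comp_def] using h

theorem norm_fderiv_comp_norm_le (hρ : Differentiable ℝ ρ) (he : ρ.Even) (y : E) :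
    ‖fderiv ℝ (fun x : E => ρ ‖x‖) y‖ ≤ |deriv ρ ‖y‖| := by
  rcases eq_or_ne y 0 with rfl | hy
  · simp [(hasFDerivAt_comp_norm_zero (hρ 0) he).fderiv]
  have hnorm : HasFDerivAt (‖·‖) (fderiv ℝ (‖·‖) y) y :=
    ((contDiffAt_norm ℝ hy).differentiableAt one_ne_zero).hasFDerivAt
  change ‖fderiv ℝ (ρ ∘ (‖·‖)) y‖ ≤ _
  rw [((hρ _).hasDerivAt.comp_hasFDerivAt y hnorm).fderiv, norm_smul, Real.norm_eq_abs]
  calc |deriv ρ ‖y‖| * ‖fderiv ℝ (‖·‖) y‖ ≤ |deriv ρ ‖y‖| * 1 := by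
        gcongr; simpa using norm_fderiv_le_of_lipschitz ℝ (lipschitzWith_one_norm (E := E))
    _ = |deriv ρ ‖y‖| := mul_one _

theorem contDiff_one_comp_norm (hρ : ContDiff ℝ 1 ρ) (he : ρ.Even) :
    ContDiff ℝ 1 (fun x : E => ρ ‖x‖) := by
  have hρd := hρ.differentiable one_ne_zero
  have h0 := hasFDerivAt_comp_norm_zero (E := E) (hρd 0) he
  have hoff : ∀ x : E, x ≠ 0 → ContDiffAt ℝ 1 (fun x : E => ρ ‖x‖) x :=
    fun x hx => hρ.contDiffAt.comp x (contDiffAt_norm ℝ hx)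
  refine contDiff_one_iff_fderiv.2 ⟨fun x => ?_, continuous_iff_continuousAt.2 fun x => ?_⟩
  all_goals rcases eq_or_ne x 0 with rfl | hx
  · exact h0.differentiableAt
  · exact (hoff x hx).differentiableAt one_ne_zero
  · rw [ContinuousAt, h0.fderiv]
    refine squeeze_zero_norm (norm_fderiv_comp_norm_le hρd he) ?_
    simpa [he.deriv_zero] using
      ((hρ.continuous_deriv le_rfl).comp continuous_norm).abs.tendsto (0 : E)
  · exact (hoff x hx).continuousAt_fderiv one_ne_zero

end Radial

section Gradient

open scoped Convolution

variable {F : Type*} [NormedAddCommGroup F] [InnerProductSpace ℝ F] [CompleteSpace F]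

theorem ContDiff.continuous_gradient {k : F → ℝ} (hk : ContDiff ℝ 1 k) : Continuous (gradient k) :=
  (InnerProductSpace.toDual ℝ F).symm.continuous.comp (hk.continuous_fderiv one_ne_zero)

theorem HasCompactSupport.gradient {k : F → ℝ} (hk : HasCompactSupport k) :
    HasCompactSupport (gradient k) :=
  (hk.fderiv ℝ).comp_left (g := (InnerProductSpace.toDual ℝ F).symm) (map_zero _)

theorem HasGradientAt.const_mul_comp_smul {f : F → ℝ} {f' x : F} (a c : ℝ)
    (hf : HasGradientAt f f' (c • x)) :
    HasGradientAt (fun y => a * f (c • y)) ((a * c) • f') x := by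
  rw [hasGradientAt_iff_hasFDerivAt] at hf ⊢
  refine ((hf.comp x ((hasFDerivAt_id x).const_smul c)).const_mul a).congr_fderiv ?_
  ext v
  simp only [ContinuousLinearMap.comp_smulₛₗ, Real.ringHom_apply, ContinuousLinearMap.comp_id,
    smul_apply, InnerProductSpace.toDual_apply_apply, smul_eq_mul, map_smul]
  ring

variable [MeasurableSpace F] [BorelSpace F] {μ : Measure F} [SFinite μ] [μ.IsAddLeftInvariant]

theorem hasGradientAt_integral_comp_sub_mul {k : F → ℝ} (hk : ContDiff ℝ 1 k)
    (hks : HasCompactSupport k) {g : F → ℝ} (hg : LocallyIntegrable g μ) (y : F) :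
    HasGradientAt (fun w => ∫ z, k (w - z) * g z ∂μ) (∫ z, g z • gradient k (y - z) ∂μ) y := by
  have hfun : (fun w => ∫ z, k (w - z) * g z ∂μ) = g ⋆[ContinuousLinearMap.mul ℝ ℝ, μ] k := by
    ext w
    simp [convolution_def, mul_comm]
  have hder : InnerProductSpace.toDual ℝ F (∫ z, g z • gradient k (y - z) ∂μ)
      = (g ⋆[(ContinuousLinearMap.mul ℝ ℝ).precompR F, μ] fderiv ℝ k) y := by
    calc InnerProductSpace.toDual ℝ F (∫ z, g z • gradient k (y - z) ∂μ)
        = ∫ z, InnerProductSpace.toDual ℝ F (g z • gradient k (y - z)) ∂μ :=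
          ((InnerProductSpace.toDual ℝ F).toLinearIsometry.integral_comp_comm _).symm
      _ = _ := by
          rw [convolution_def]
          congr 1 with z v
          simp [toDual_gradient]
  rw [hasGradientAt_iff_hasFDerivAt, hfun, hder]
  exact hks.hasFDerivAt_convolution_right _ hg hk y

end Gradient

namespace VarifoldPaper

variable {n d : ℕ}

theorem Gr.norm_op_apply_le (P : Gr n d) (v : Euc n) : ‖Gr.op P v‖ ≤ ‖v‖ := by
  obtain ⟨P, hsym, hidem, -⟩ := P
  change ‖P v‖ ≤ ‖v‖
  have h : ‖P v‖ ^ 2 = ⟪v, P v⟫ := by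
    rw [← real_inner_self_eq_norm_sq]
    calc ⟪P v, P v⟫ = ⟪v, P (P v)⟫ := hsym v (P v)
      _ = ⟪v, P v⟫ := by rw [← ContinuousLinearMap.comp_apply P P v, hidem]
  nlinarith [real_inner_le_norm v (P v), norm_nonneg (P v), norm_nonneg v]

theorem Gr.continuous_op : Continuous (Gr.op : Gr n d → CLM n) := continuous_subtype_val

theorem Gr.continuous_op_apply {α : Type*} [TopologicalSpace α] {A : α → Gr n d}
    {v : α → Euc n} (hA : Continuous A) (hv : Continuous v) :
    Continuous fun a => Gr.op (A a) (v a) :=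
  (Gr.continuous_op.comp hA).clm_apply hv

theorem sdiv_integral_smul_comp_sub {k : Euc n → ℝ} (hk : ContDiff ℝ 1 k)
    (hks : HasCompactSupport k) {X : Euc n → Euc n} (hX : Continuous X) (P : Gr n d)
    (y : Euc n) :
    sdiv P (fun w => ∫ z, k (w - z) • X z) y = ∫ z, ⟪X z, Gr.op P (gradient k (y - z))⟫ := by
  have hXj (j : Fin n) : Continuous fun z => X z j :=
    (EuclideanSpace.proj j).continuous.comp hX
  have hint (j : Fin n) : Integrable fun z => X z j • gradient k (y - z) :=
    hks.gradient.convolutionExists_right (ContinuousLinearMap.lsmul ℝ ℝ)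
      (hXj j).locallyIntegrable hk.continuous_gradient y
  have hgrad (j : Fin n) : gradient (fun w => EuclideanSpace.proj j (∫ z, k (w - z) • X z)) y
      = ∫ z, X z j • gradient k (y - z) := by
    have hproj : (fun w => EuclideanSpace.proj j (∫ z, k (w - z) • X z))
        = fun w => ∫ z, k (w - z) * X z j := by
      ext w
      have hkX : Integrable fun z => k (w - z) • X z :=
        hks.convolutionExists_right (ContinuousLinearMap.lsmul ℝ ℝ).flip hX.locallyIntegrable
          hk.continuous w
      rw [← ContinuousLinearMap.integral_comp_comm _ hkX]
      simp
    rw [hproj]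
    exact (hasGradientAt_integral_comp_sub_mul hk hks (hXj j).locallyIntegrable y).gradient
  have hcoord (j : Fin n) : EuclideanSpace.proj j (Gr.op P (∫ z, X z j • gradient k (y - z)))
      = ∫ z, X z j * Gr.op P (gradient k (y - z)) j := by
    rw [← ContinuousLinearMap.comp_apply, ← ContinuousLinearMap.integral_comp_comm _ (hint j)]
    simp
  simp only [sdiv, hgrad, hcoord]
  rw [← integral_finsetSum]
  · congr 1 with z
    simp [PiLp.inner_apply, mul_comm]
  · intro j _
    simpa using ((EuclideanSpace.proj j).comp (Gr.op P)).integrable_comp (hint j)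

section Varifold

variable (V : Measure (Euc n × Gr n d)) [IsFiniteMeasure V] {G : Euc n → Euc n}

theorem integrable_op_comp_sub {C : ℝ} (hG : Continuous G) (hGC : ∀ x, ‖G x‖ ≤ C) (x : Euc n) :
    Integrable (fun p : Euc n × Gr n d => Gr.op p.2 (G (p.1 - x))) V :=
  (integrable_const C).mono'
    (Gr.continuous_op_apply continuous_snd
      (hG.comp (continuous_fst.sub continuous_const))).aestronglyMeasurable
    (Eventually.of_forall fun _ => (Gr.norm_op_apply_le _ _).trans (hGC _))

theorem continuous_integral_op_comp_sub {C : ℝ} (hG : Continuous G) (hGC : ∀ x, ‖G x‖ ≤ C) :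
    Continuous fun x => ∫ p, Gr.op p.2 (G (p.1 - x)) ∂V :=
  continuous_of_dominated (fun x => (integrable_op_comp_sub V hG hGC x).aestronglyMeasurable)
    (fun _ => Eventually.of_forall fun _ => (Gr.norm_op_apply_le _ _).trans (hGC _))
    (integrable_const C)
    (Eventually.of_forall fun _ =>
      Gr.continuous_op_apply continuous_const (hG.comp (continuous_const.sub continuous_id)))

theorem integrable_op_comp_sub_prod (hG : Continuous G) (hGs : HasCompactSupport G) :
    Integrable (fun q : (Euc n × Gr n d) × Euc n => Gr.op q.1.2 (G (q.1.1 - q.2)))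
      (V.prod volume) := by
  have hshear : MeasurePreserving (fun q : (Euc n × Gr n d) × Euc n => (q.1, q.1.1 - q.2))
      (V.prod volume) (V.prod volume) :=
    (MeasurePreserving.id V).skew_product ((measurable_fst.comp measurable_fst).sub measurable_snd)
      (Eventually.of_forall fun p => (Measure.measurePreserving_sub_left volume p.1).map_eq)
  have hnorm : Integrable (fun q : (Euc n × Gr n d) × Euc n => ‖G q.2‖) (V.prod volume) :=
    (hG.integrable_of_hasCompactSupport hGs).norm.comp_snd V
  exact ((hshear.integrable_comp hnorm.aestronglyMeasurable).2 hnorm).mono'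
    (Gr.continuous_op_apply (continuous_snd.comp continuous_fst)
      (hG.comp ((continuous_fst.comp continuous_fst).sub continuous_snd))).aestronglyMeasurable
    (Eventually.of_forall fun _ => Gr.norm_op_apply_le _ _)

theorem integrable_integral_op_comp_sub (hG : Continuous G) (hGs : HasCompactSupport G) :
    Integrable fun x => ∫ p, Gr.op p.2 (G (p.1 - x)) ∂V :=
  (integrable_op_comp_sub_prod V hG hGs).swap.integral_prod_left

theorem firstVar_integral_smul_comp_sub {k : Euc n → ℝ} (hk : ContDiff ℝ 1 k)
    (hks : HasCompactSupport k) {X : Euc n → Euc n} (hX : Continuous X)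
    (hXs : HasCompactSupport X) :
    firstVar V (fun y => ∫ z, k (y - z) • X z)
      = ∫ y, ⟪X y, ∫ p, Gr.op p.2 (gradient k (p.1 - y)) ∂V⟫ := by
  obtain ⟨C, hC⟩ := hks.gradient.exists_bound_of_continuous hk.continuous_gradient
  have hint : Integrable (uncurry fun (p : Euc n × Gr n d) (z : Euc n) =>
      ⟪X z, Gr.op p.2 (gradient k (p.1 - z))⟫) (V.prod volume) := by
    refine (((hX.integrable_of_hasCompactSupport hXs).norm.mul_const C).comp_snd V).mono'
      ((hX.comp continuous_snd).inner (Gr.continuous_op_apply (continuous_snd.comp continuous_fst)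
        (hk.continuous_gradient.comp ((continuous_fst.comp continuous_fst).sub
          continuous_snd)))).aestronglyMeasurable (Eventually.of_forall fun q => ?_)
    calc ‖⟪X q.2, Gr.op q.1.2 (gradient k (q.1.1 - q.2))⟫‖
        ≤ ‖X q.2‖ * ‖Gr.op q.1.2 (gradient k (q.1.1 - q.2))‖ := norm_inner_le_norm _ _
      _ ≤ ‖X q.2‖ * C := by gcongr; exact (Gr.norm_op_apply_le _ _).trans (hC _)
  simp only [firstVar, sdiv_integral_smul_comp_sub hk hks hX]
  rw [integral_integral_swap hint]
  congr 1 with y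
  exact integral_inner (integrable_op_comp_sub V hk.continuous_gradient hC y) _

end Varifold

theorem contDiff_keps {ρ : ℝ → ℝ} (hρ : ContDiff ℝ 1 ρ) (he : ρ.Even) (ε : ℝ) :
    ContDiff ℝ 1 (keps n ρ ε) :=
  contDiff_one_comp_norm (ρ := fun s => (ε ^ n)⁻¹ * ρ (s / ε))
    (contDiff_const.mul (hρ.comp (contDiff_id.div_const ε)))
    (fun s => by simp only [neg_div, he _])

theorem hasCompactSupport_keps {ρ : ℝ → ℝ} (hsupp : ∀ s : ℝ, 1 ≤ |s| → ρ s = 0) {ε : ℝ}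
    (hε : ε ≠ 0) : HasCompactSupport (keps n ρ ε) := by
  refine HasCompactSupport.intro (isCompact_closedBall (0 : Euc n) |ε|) fun x hx => ?_
  have hx' : |ε| < ‖x‖ := by simpa using hx
  have h1 : 1 ≤ |‖x‖ / ε| := by
    rw [abs_div, abs_norm, le_div_iff₀ (abs_pos.2 hε)]
    linarith
  simp [keps, hsupp _ h1]

theorem gradient_keps {ρ : ℝ → ℝ} (hρ : ContDiff ℝ 1 ρ) (he : ρ.Even) {ε : ℝ} (hε : 0 < ε)
    (z : Euc n) :
    gradient (keps n ρ ε) z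
      = (ε ^ (n + 1))⁻¹ • gradient (fun x : Euc n => ρ ‖x‖) (ε⁻¹ • z) := by
  have hscale : keps n ρ ε = fun y => (ε ^ n)⁻¹ * ρ ‖ε⁻¹ • y‖ := by
    ext y
    simp only [keps, norm_smul, norm_inv, Real.norm_of_nonneg hε.le, div_eq_inv_mul]
  have hdiff := (contDiff_one_comp_norm (E := Euc n) hρ he).differentiable one_ne_zero (ε⁻¹ • z)
  rw [hscale, (hdiff.hasGradientAt.const_mul_comp_smul (ε ^ n)⁻¹ ε⁻¹).gradient, ← mul_inv,
    ← pow_succ]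

theorem statement_1_general {n d : ℕ}
    (V : Measure (Euc n × Gr n d)) [IsFiniteMeasure V]
    (ρ : ℝ → ℝ) (hρ : IsProfile n ρ) (hρC1 : ContDiff ℝ 1 ρ)
    (ε : ℝ) (hε : 0 < ε) :
    Continuous (regFV ρ ε V) ∧
    Integrable (regFV ρ ε V) volume ∧
    (∀ x : Euc n, regFV ρ ε V x
        = (ε ^ (n + 1) : ℝ)⁻¹ •
            ∫ p, Gr.op p.2 (gradient (fun z : Euc n => ρ ‖z‖) (ε⁻¹ • (p.1 - x))) ∂V) ∧
    (∀ X : Euc n → Euc n, C1c X →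
        firstVar V (fun y => ∫ z, keps n ρ ε (y - z) • X z)
          = ∫ y, ⟪X y, regFV ρ ε V y⟫) := by
  have hk : ContDiff ℝ 1 (keps n ρ ε) := contDiff_keps hρC1 hρ.even ε
  have hks : HasCompactSupport (keps n ρ ε) := hasCompactSupport_keps hρ.compact_supp hε.ne'
  obtain ⟨C, hC⟩ := hks.gradient.exists_bound_of_continuous hk.continuous_gradient
  refine ⟨continuous_integral_op_comp_sub V hk.continuous_gradient hC,
    integrable_integral_op_comp_sub V hk.continuous_gradient hks.gradient, fun x => ?_,
    fun X hX => firstVar_integral_smul_comp_sub V hk hks hX.1.continuous hX.2⟩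
  simp only [regFV, gradient_keps hρC1 hρ.even hε, map_smul, integral_smul]

/-- Proposition `expression_of_delta_V^epsilon`.
The regularized first variation `δV ∗ ρ_ε`, defined by `δV ∗ ρ_ε(X) = δV(X ∗ ρ_ε)`, is
represented by the continuous vector field `x ↦ ∫ ∇^S ρ_ε(y-x) dV(y,S)
= ε^{-(n+1)} ∫ ∇^S ρ₁((y-x)/ε) dV(y,S)`, which moreover belongs to `L¹(ℝⁿ; ℝⁿ)`. -/
theorem statement_1 {n d : ℕ} (hd : 1 ≤ d) (hdn : d < n)
    (Ω : Set (Euc n)) (hΩ : IsOpen Ω)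
    (V : Measure (Euc n × Gr n d)) [IsFiniteMeasure V]
    (hVΩ : V {p : Euc n × Gr n d | p.1 ∉ Ω} = 0)
    (ρ : ℝ → ℝ) (hρ : IsProfile n ρ) (hρC1 : ContDiff ℝ 1 ρ)
    (ε : ℝ) (hε : 0 < ε) :
    Continuous (regFV ρ ε V) ∧
    Integrable (regFV ρ ε V) volume ∧
    (∀ x : Euc n, regFV ρ ε V x
        = (ε ^ (n + 1) : ℝ)⁻¹ •
            ∫ p, Gr.op p.2 (gradient (fun z : Euc n => ρ ‖z‖) (ε⁻¹ • (p.1 - x))) ∂V) ∧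
    (∀ X : Euc n → Euc n, C1c X →
        firstVar V (fun y => ∫ z, keps n ρ ε (y - z) • X z)
          = ∫ y, ⟪X y, regFV ρ ε V y⟫) :=
  statement_1_general V ρ hρ hρC1 ε hε

end VarifoldPaper
end
end

section
/- Let Ω ⊂ ℝⁿ be an open set, V a d-varifold in Ω, and (𝒦_i)_{i∈ℕ} a sequence of meshes of Ω with sizes δ_i = sup_{K∈𝒦_i} diam K. Then there exists a sequence (V_i)_i of discrete varifolds (volumetric as well as point cloud) such that for every open set U ⊂ Ω, Δ^{1,1}_U(V, V_i) ≤ δ_i ‖V‖(U^{δ_i}) + Σ_{K∈𝒦_i} min_{P∈G_{d,n}} ∫_{(U^{δ_i}∩K)×G_{d,n}} ‖P − S‖ dV(x,S). -/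
/-!
On each cell `K` the varifold is replaced by the point mass `V(K × G) δ_{(x_K, P_K)}`, with
`x_K ∈ K` and `P_K` minimising `P ↦ ∫_{K×G} ‖P - S‖ dV`, a continuous function on the compact
Grassmannian. Against a `1`-Lipschitz test function `φ` supported in `U × G`, the error on a cell
is at most `∫ |φ(x,S) - φ(x_K,P_K)| dV ≤ δ V(K × G) + ∫_{K×G} ‖P_K - S‖ dV`; it vanishes on cells
missing `U`, and cells meeting `U` lie in `U^δ`. Since the cells need not be measurable, `V` is
first split into a sum of measures, each dominated by the restriction of `V` to one cell.
The mesh size is positive unless `Ω` is empty, because a nonempty open set is uncountable.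
-/

open MeasureTheory Filter Metric Set Function
open scoped ENNReal NNReal RealInnerProductSpace Topology Pointwise

noncomputable section

namespace MeasureTheory

variable {α ι : Type*} [MeasurableSpace α]

theorem Measure.exists_le_restrict_sum_eq [Countable ι] (μ : Measure α) [SFinite μ]
    {s : ι → Set α} (hs : ∀ᵐ a ∂μ, a ∈ ⋃ k, s k) :
    ∃ ν : ι → Measure α, (∀ k, ν k ≤ μ.restrict (s k)) ∧ Measure.sum ν = μ := by
  -- Disjointify the measurable hulls of the `s k` along an injection `ι → ℕ`.
  obtain ⟨e, he⟩ := exists_injective_nat ι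
  set T : ℕ → Set α := fun m => ⋃ (k) (_ : e k = m), toMeasurable μ (s k)
  set B : ι → Set α := fun k => disjointed T (e k)
  have hT_le : ∀ k, T (e k) ⊆ toMeasurable μ (s k) :=
    fun k => iUnion₂_subset fun j hj => by rw [he hj]
  have hB_meas : ∀ k, MeasurableSet (B k) := fun k =>
    MeasurableSet.disjointed (fun m => .iUnion fun k => .iUnion fun _ =>
      measurableSet_toMeasurable μ (s k)) _
  have hs_sub : (⋃ k, s k) ⊆ ⋃ k, B k := by
    intro a ha
    obtain ⟨k, hk⟩ := mem_iUnion.mp ha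
    have : a ∈ ⋃ m, disjointed T m := by
      rw [iUnion_disjointed]
      exact mem_iUnion.mpr ⟨e k, mem_biUnion (x := k) rfl (subset_toMeasurable μ _ hk)⟩
    obtain ⟨m, hm⟩ := mem_iUnion.mp this
    obtain ⟨j, hj, -⟩ := mem_iUnion₂.mp (disjointed_subset T m hm)
    exact mem_iUnion.mpr ⟨j, by simpa [B, hj] using hm⟩
  refine ⟨fun k => μ.restrict (B k), fun k => ?_, ?_⟩
  · rw [← Measure.restrict_toMeasurable_of_sFinite]
    exact Measure.restrict_mono ((disjointed_subset T _).trans (hT_le k)) le_rfl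
  · rw [← Measure.restrict_iUnion ((disjoint_disjointed T).comp_of_injective he) hB_meas,
      Measure.restrict_eq_self_of_ae_mem (hs.mono fun a ha => hs_sub ha)]

theorem lintegral_mono_of_le_restrict {μ ν : Measure α} {s : Set α} (hν : ν ≤ μ.restrict s)
    {f g : α → ℝ≥0∞} (hf : Measurable f) (hg : Measurable g) (hfg : ∀ a ∈ s, f a ≤ g a) :
    ∫⁻ a, f a ∂ν ≤ ∫⁻ a, g a ∂ν :=
  lintegral_mono_ae <| ae_mono hν <|
    (ae_restrict_iff (measurableSet_le hf hg)).mpr (ae_of_all _ hfg)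

theorem exists_forall_lintegral_edist_le {Y : Type*} [PseudoEMetricSpace Y] [CompactSpace Y]
    [Nonempty Y] (μ : Measure α) [IsFiniteMeasure μ] (g : α → Y) :
    ∃ y₀, ∀ y, ∫⁻ a, edist y₀ (g a) ∂μ ≤ ∫⁻ a, edist y (g a) ∂μ := by
  have hcont : Continuous fun y => ∫⁻ a, edist y (g a) ∂μ := by
    refine continuous_of_le_add_edist (μ univ) (measure_ne_top μ univ) fun y y' => ?_
    calc ∫⁻ a, edist y (g a) ∂μ ≤ ∫⁻ a, (edist y' (g a) + edist y y') ∂μ :=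
          lintegral_mono fun a => (edist_triangle _ y' _).trans_eq (add_comm _ _)
      _ = ∫⁻ a, edist y' (g a) ∂μ + μ univ * edist y y' := by
          rw [lintegral_add_right _ measurable_const, lintegral_const, mul_comm]
  obtain ⟨y₀, -, hy₀⟩ := isCompact_univ.exists_isMinOn univ_nonempty hcont.continuousOn
  exact ⟨y₀, fun y => hy₀ (mem_univ y)⟩

theorem enorm_integral_sub_integral_sum_dirac_le (μ : ι → Measure α) [∀ k, IsFiniteMeasure (μ k)]
    (q : ι → α) {φ : α → ℝ} (hφ : StronglyMeasurable φ) (hint : Integrable φ (Measure.sum μ)) :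
    ‖∫ a, φ a ∂(Measure.sum μ) -
        ∫ a, φ a ∂(Measure.sum fun k => μ k univ • Measure.dirac (q k))‖ₑ ≤
      ∑' k, ∫⁻ a, ‖φ a - φ (q k)‖ₑ ∂(μ k) := by
  set R := ∑' k, ∫⁻ a, ‖φ a - φ (q k)‖ₑ ∂(μ k)
  rcases eq_or_ne R ∞ with hR | hR
  · exact hR ▸ le_top
  have hφk : ∀ k, Integrable φ (μ k) := fun k => hint.mono_measure (Measure.le_sum μ k)
  have hint_dirac : Integrable φ (Measure.sum fun k => μ k univ • Measure.dirac (q k)) := by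
    refine ⟨hφ.aestronglyMeasurable, ?_⟩
    calc ∫⁻ a, ‖φ a‖ₑ ∂(Measure.sum fun k => μ k univ • Measure.dirac (q k))
        = ∑' k, ∫⁻ _, ‖φ (q k)‖ₑ ∂(μ k) := by
          simp only [lintegral_sum_measure, lintegral_smul_measure,
            lintegral_dirac' _ hφ.measurable.enorm, lintegral_const, smul_eq_mul, mul_comm]
      _ ≤ ∑' k, ∫⁻ a, (‖φ a‖ₑ + ‖φ a - φ (q k)‖ₑ) ∂(μ k) := by
          gcongr with k a
          simpa using enorm_sub_le (a := φ a) (b := φ a - φ (q k))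
      _ = ∫⁻ a, ‖φ a‖ₑ ∂(Measure.sum μ) + R := by
          simp only [lintegral_add_left hφ.measurable.enorm, ENNReal.tsum_add,
            lintegral_sum_measure, R]
      _ < ∞ := ENNReal.add_lt_top.mpr ⟨hint.2, hR.lt_top⟩
  have hdirac : ∀ k, ∫ a, φ a ∂(μ k univ • Measure.dirac (q k)) = ∫ _, φ (q k) ∂(μ k) := by
    intro k
    rw [integral_smul_measure, integral_dirac' _ _ hφ, integral_const, smul_eq_mul, smul_eq_mul,
      measureReal_def]
  calc _ = ‖∑' k, ∫ a, (φ a - φ (q k)) ∂(μ k)‖ₑ := by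
        rw [← ((hasSum_integral_measure hint).sub (hasSum_integral_measure hint_dirac)).tsum_eq]
        simp only [hdirac, integral_sub (hφk _) (integrable_const _)]
    _ ≤ ∑' k, ‖∫ a, (φ a - φ (q k)) ∂(μ k)‖ₑ := enorm_tsum_le_tsum_enorm
    _ ≤ R := ENNReal.tsum_le_tsum fun k => enorm_integral_le_lintegral_enorm _

end MeasureTheory

theorem subset_thickening_of_ediam_le {E : Type*} [NormedAddCommGroup E] [NormedSpace ℝ E]
    {δ : ℝ} (hδ : 0 < δ) {U C : Set E} (hU : IsOpen U) (hC : ediam C ≤ ENNReal.ofReal δ)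
    (hCU : (C ∩ U).Nonempty) : C ⊆ thickening δ U := by
  obtain ⟨y, hyC, hyU⟩ := hCU
  obtain ⟨ε, hε, hball⟩ := Metric.isOpen_iff.mp hU y hyU
  intro x hx
  have hxy : dist x y ≤ δ :=
    (edist_le_ofReal hδ.le).mp ((edist_le_ediam_of_mem hx hyC).trans hC)
  have hx' : x ∈ ball y (δ + ε) := mem_ball.mpr (by linarith)
  rw [← thickening_ball hδ hε] at hx'
  exact thickening_subset_of_subset δ hball hx'

theorem pos_of_iUnion_eq_of_ediam_le {E : Type*} [NormedAddCommGroup E] [NormedSpace ℝ E]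
    [Nontrivial E] {Ω : Set E} (hΩ : IsOpen Ω) (hΩne : Ω.Nonempty) {ι : Type*} [Countable ι]
    {K : ι → Set E} (hcover : ⋃ k, K k = Ω) {δ : ℝ} (hK : ∀ k, ediam (K k) ≤ ENNReal.ofReal δ) :
    0 < δ := by
  by_contra! hδ
  have hΩc : Ω.Countable := hcover ▸ countable_iUnion fun k => (ediam_eq_zero_iff.mp <|
    le_antisymm ((hK k).trans_eq (ENNReal.ofReal_eq_zero.mpr hδ)) zero_le).countable
  have hΩ_int := interior_eq_empty_iff_dense_compl.mpr (hΩc.dense_compl ℝ)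
  exact hΩne.ne_empty (hΩ.interior_eq ▸ hΩ_int)

theorem LipschitzWith.enorm_sub_le_of_edist_le {α β : Type*} [PseudoEMetricSpace α]
    [PseudoEMetricSpace β] {φ : α × β → ℝ} (hφ : LipschitzWith 1 φ) {p : α × β} {x : α} {y : β}
    {r : ℝ≥0∞} (hpx : edist p.1 x ≤ r) : ‖φ p - φ (x, y)‖ₑ ≤ r + edist y p.2 :=
  calc ‖φ p - φ (x, y)‖ₑ = edist (φ p) (φ (x, y)) := (edist_eq_enorm_sub _ _).symm
    _ ≤ edist p (x, y) := by simpa only [ENNReal.coe_one, one_mul] using hφ.edist_le_mul p (x, y)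
    _ ≤ edist p.1 x + edist p.2 y := by
        rw [Prod.edist_eq]; exact max_le_add_of_nonneg zero_le zero_le
    _ ≤ r + edist y p.2 := by rw [edist_comm p.2]; gcongr

namespace ContinuousLinearMap

variable {𝕜 E : Type*} [RCLike 𝕜] [NormedAddCommGroup E] [InnerProductSpace 𝕜 E] [CompleteSpace E]

theorem isStarProjection_iff_isSymmetric_and_comp_self (P : E →L[𝕜] E) :
    IsStarProjection P ↔ (P : E →ₗ[𝕜] E).IsSymmetric ∧ P.comp P = P := by
  rw [isStarProjection_iff_isSymmetricProjection, LinearMap.isSymmetricProjection_iff, and_comm,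
    IsIdempotentElem, Module.End.mul_eq_comp, ← toLinearMap_comp, coe_inj]

theorem isClosed_setOf_isStarProjection : IsClosed {P : E →L[𝕜] E | IsStarProjection P} := by
  simp only [isStarProjection_iff, IsSelfAdjoint, star_eq_adjoint, ofPred_and]
  exact (isClosed_eq (continuous_id.mul continuous_id) continuous_id).inter
    (isClosed_eq adjoint.continuous continuous_id)

end ContinuousLinearMap

namespace VarifoldPaper
namespace Gr

variable {n d : ℕ}

lemma edist_eq (P Q : Gr n d) : edist P Q = ENNReal.ofReal ‖Gr.op P - Gr.op Q‖ := by
  rw [edist_dist, show dist P Q = dist (Gr.op P) (Gr.op Q) from rfl, dist_eq_norm]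

lemma isCompact_setOf :
    IsCompact {P : CLM n | LinearMap.IsSymmetric (P : Euc n →ₗ[ℝ] Euc n) ∧ P.comp P = P ∧
      Module.finrank ℝ (LinearMap.range (P : Euc n →ₗ[ℝ] Euc n)) = d} := by
  simp_rw [← and_assoc, ← ContinuousLinearMap.isStarProjection_iff_isSymmetric_and_comp_self]
  -- The rank of an idempotent is its trace, a continuous function of `P`.
  have htrace : {P : CLM n | IsStarProjection P ∧
      Module.finrank ℝ (LinearMap.range (P : Euc n →ₗ[ℝ] Euc n)) = d} =
      {P | IsStarProjection P} ∩
        {P : CLM n | LinearMap.trace ℝ (Euc n) (P : Euc n →ₗ[ℝ] Euc n) = d} :=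
    Set.ext fun P => and_congr_right fun hP => by
      rw [mem_ofPred_eq, (LinearMap.IsIdempotentElem.isProj_range _
        (ContinuousLinearMap.IsIdempotentElem.toLinearMap hP.isIdempotentElem)).trace,
        Nat.cast_inj]
  have htrace_cont : Continuous fun P : CLM n =>
      LinearMap.trace ℝ (Euc n) (P : Euc n →ₗ[ℝ] Euc n) :=
    LinearMap.continuous_of_finiteDimensional
      ((LinearMap.trace ℝ (Euc n)).comp (ContinuousLinearMap.coeLM ℝ))
  rw [htrace]
  refine Metric.isCompact_of_isClosed_isBounded
    (ContinuousLinearMap.isClosed_setOf_isStarProjection.inter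
      (isClosed_eq htrace_cont continuous_const))
    ((Metric.isBounded_closedBall (x := 0) (r := 1)).subset fun P hP => ?_)
  simpa using hP.1.norm_le

instance : CompactSpace (Gr n d) := by
  unfold Gr; exact isCompact_iff_compactSpace.mp isCompact_setOf

lemma nonempty_of_le (h : d ≤ n) : Nonempty (Gr n d) := by
  obtain ⟨f, hf⟩ := exists_linearIndependent_of_le_finrank (R := ℝ) (M := Euc n) (n := d)
    (by rwa [finrank_euclideanSpace_fin])
  set U := Submodule.span ℝ (range f)
  refine ⟨⟨U.starProjection, U.starProjection_isSymmetric, U.isIdempotentElem_starProjection, ?_⟩⟩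
  rw [Submodule.range_starProjection, finrank_span_eq_card hf, Fintype.card_fin]

end Gr

lemma mass_apply {n d : ℕ} (V : Measure (Euc n × Gr n d)) {s : Set (Euc n)}
    (hs : MeasurableSet s) : mass V s = V (s ×ˢ univ) := by
  rw [mass, Measure.map_apply measurable_fst hs, prod_univ]

lemma ofReal_BL_le {n d : ℕ} {U : Set (Euc n)} {V W : Measure (Euc n × Gr n d)} {C : ℝ≥0∞}
    (h : ∀ φ : Euc n × Gr n d → ℝ, LipschitzWith 1 φ → (∀ p, |φ p| ≤ 1) →
      tsupport φ ⊆ U ×ˢ univ → ‖∫ p, φ p ∂V - ∫ p, φ p ∂W‖ₑ ≤ C) :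
    ENNReal.ofReal (BL U V W) ≤ C := by
  rcases eq_or_ne C ∞ with rfl | hC
  · exact le_top
  refine ENNReal.ofReal_le_of_le_toReal (Real.sSup_le ?_ ENNReal.toReal_nonneg)
  rintro r ⟨φ, hφ, hφ_le, hφU, rfl⟩
  rw [← ENNReal.ofReal_le_iff_le_toReal hC, ← Real.enorm_eq_ofReal_abs]
  exact h φ hφ hφ_le hφU

section PointCloud

variable {n d : ℕ} {V : Measure (Euc n × Gr n d)} {δ : ℝ} {U C : Set (Euc n)}

lemma lintegral_enorm_sub_le_of_le_restrict (hδ : 0 < δ) (hU : IsOpen U)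
    (hC : ediam C ≤ ENNReal.ofReal δ) {ν : Measure (Euc n × Gr n d)}
    (hν : ν ≤ V.restrict (C ×ˢ univ)) {x : Euc n} (hx : C.Nonempty → x ∈ C) {P₀ : Gr n d}
    (hP₀ : ∀ P, ∫⁻ p in C ×ˢ univ, edist P₀ p.2 ∂V ≤ ∫⁻ p in C ×ˢ univ, edist P p.2 ∂V)
    {φ : Euc n × Gr n d → ℝ} (hφ : LipschitzWith 1 φ) (hφU : tsupport φ ⊆ U ×ˢ univ) :
    ∫⁻ p, ‖φ p - φ (x, P₀)‖ₑ ∂ν ≤ ENNReal.ofReal δ * ν (thickening δ U ×ˢ univ) +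
      ⨅ P : Gr n d, ∫⁻ p in (thickening δ U ∩ C) ×ˢ univ,
        ENNReal.ofReal ‖Gr.op P - Gr.op p.2‖ ∂V := by
  have hφ_meas : Measurable fun p => ‖φ p - φ (x, P₀)‖ₑ :=
    (hφ.continuous.sub continuous_const).measurable.enorm
  by_cases hCU : (C ∩ U).Nonempty
  · have hCT := subset_thickening_of_ediam_le hδ hU hC hCU
    have hxC := hx (hCU.mono inter_subset_left)
    set T := thickening δ U ×ˢ (univ : Set (Gr n d))
    have hT : MeasurableSet T := isOpen_thickening.measurableSet.prod MeasurableSet.univ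
    calc ∫⁻ p, ‖φ p - φ (x, P₀)‖ₑ ∂ν
        ≤ ∫⁻ p, (T.indicator (fun _ => ENNReal.ofReal δ) p + edist P₀ p.2) ∂ν := by
          refine lintegral_mono_of_le_restrict hν hφ_meas
            ((measurable_const.indicator hT).add (by fun_prop)) fun p hp => ?_
          rw [indicator_of_mem (mk_mem_prod (hCT hp.1) (mem_univ _))]
          exact hφ.enorm_sub_le_of_edist_le ((edist_le_ediam_of_mem hp.1 hxC).trans hC)
      _ = ENNReal.ofReal δ * ν T + ∫⁻ p, edist P₀ p.2 ∂ν := by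
          rw [lintegral_add_left (measurable_const.indicator hT), lintegral_indicator_const hT]
      _ ≤ ENNReal.ofReal δ * ν T + ∫⁻ p in C ×ˢ univ, edist P₀ p.2 ∂V := by
          gcongr
      _ ≤ _ := by
          rw [inter_eq_right.mpr hCT]
          simp_rw [← Gr.edist_eq]
          gcongr
          exact le_iInf hP₀
  · have hvanish : ∀ y ∉ U, ∀ P, φ (y, P) = 0 := fun y hy P =>
      image_eq_zero_of_notMem_tsupport fun h => hy (hφU h).1
    calc ∫⁻ p, ‖φ p - φ (x, P₀)‖ₑ ∂ν ≤ ∫⁻ _, 0 ∂ν := by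
          refine lintegral_mono_of_le_restrict hν hφ_meas measurable_const fun p hp => ?_
          have hxC := hx ⟨p.1, hp.1⟩
          rw [hvanish p.1 (fun h => hCU ⟨p.1, hp.1, h⟩), hvanish x (fun h => hCU ⟨x, hxC, h⟩)]
          simp
      _ ≤ _ := by simp

theorem ofReal_BL_sum_dirac_le (hδ : 0 < δ) (hU : IsOpen U) {ι : Type*} {K : ι → Set (Euc n)}
    (hK : ∀ k, ediam (K k) ≤ ENNReal.ofReal δ) {ν : ι → Measure (Euc n × Gr n d)}
    [∀ k, IsFiniteMeasure (ν k)] (hν : ∀ k, ν k ≤ V.restrict (K k ×ˢ univ))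
    (hsum : Measure.sum ν = V) {x : ι → Euc n} (hx : ∀ k, (K k).Nonempty → x k ∈ K k)
    {P₀ : ι → Gr n d} (hP₀ : ∀ k P, ∫⁻ p in K k ×ˢ univ, edist (P₀ k) p.2 ∂V ≤
      ∫⁻ p in K k ×ˢ univ, edist P p.2 ∂V) :
    ENNReal.ofReal (BL U V (Measure.sum fun k => ν k univ • Measure.dirac (x k, P₀ k))) ≤
      ENNReal.ofReal δ * mass V (thickening δ U) +
        ∑' k, ⨅ P : Gr n d, ∫⁻ p in (thickening δ U ∩ K k) ×ˢ univ,
          ENNReal.ofReal ‖Gr.op P - Gr.op p.2‖ ∂V := by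
  refine ofReal_BL_le fun φ hφ hφ_le hφU => ?_
  rw [mass_apply V isOpen_thickening.measurableSet]
  set T := thickening δ U ×ˢ (univ : Set (Gr n d))
  have hT : MeasurableSet T := isOpen_thickening.measurableSet.prod MeasurableSet.univ
  rcases eq_or_ne (V T) ∞ with hVT | hVT
  · simp [hVT, ENNReal.mul_top, hδ]
  have hφ_int : Integrable φ (Measure.sum ν) := by
    rw [hsum]
    refine (integrableOn_iff_integrable_of_support_subset ?_).mp
      (Measure.integrableOn_of_bounded hVT hφ.continuous.aestronglyMeasurable (M := 1)
        (ae_of_all _ fun p => by simpa using hφ_le p))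
    exact (subset_tsupport φ).trans (hφU.trans (prod_mono (self_subset_thickening hδ U) le_rfl))
  rw [← hsum]
  calc _ ≤ ∑' k, ∫⁻ p, ‖φ p - φ (x k, P₀ k)‖ₑ ∂(ν k) :=
        enorm_integral_sub_integral_sum_dirac_le ν _ hφ.continuous.stronglyMeasurable hφ_int
    _ ≤ ∑' k, (ENNReal.ofReal δ * ν k T + ⨅ P : Gr n d, ∫⁻ p in (thickening δ U ∩ K k) ×ˢ univ,
          ENNReal.ofReal ‖Gr.op P - Gr.op p.2‖ ∂V) :=
        ENNReal.tsum_le_tsum fun k => lintegral_enorm_sub_le_of_le_restrict hδ hU (hK k) (hν k)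
          (hx k) (hP₀ k) hφ hφU
    _ = _ := by rw [ENNReal.tsum_add, ENNReal.tsum_mul_left, ← Measure.sum_apply _ hT, hsum]

theorem exists_isPointCloudOn_BL_le (hdn : d ≤ n) [IsLocallyFiniteMeasure V] {ι : Type}
    [Countable ι] (K : ι → Set (Euc n)) (hV : ∀ᵐ p ∂V, p.1 ∈ ⋃ k, K k) (hδ : 0 < δ)
    (hK : ∀ k, ediam (K k) ≤ ENNReal.ofReal δ) :
    ∃ W : Measure (Euc n × Gr n d), IsPointCloudOn K W ∧
      ∀ U : Set (Euc n), IsOpen U →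
        ENNReal.ofReal (BL U V W) ≤ ENNReal.ofReal δ * mass V (thickening δ U) +
          ∑' k, ⨅ P : Gr n d, ∫⁻ p in (thickening δ U ∩ K k) ×ˢ univ,
            ENNReal.ofReal ‖Gr.op P - Gr.op p.2‖ ∂V := by
  have := Gr.nonempty_of_le hdn
  obtain ⟨ν, hν, hsum⟩ := Measure.exists_le_restrict_sum_eq V (s := fun k => K k ×ˢ univ)
    (by simpa only [← iUnion_prod_const, mem_prod, mem_univ, and_true] using hV)
  have hfin : ∀ k, IsFiniteMeasure (V.restrict (K k ×ˢ univ)) := fun k =>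
    isFiniteMeasure_restrict.mpr ((isBounded_iff_ediam_ne_top.mpr
      (ne_top_of_le_ne_top ENNReal.ofReal_ne_top (hK k))).prod
      isCompact_univ.isBounded).measure_lt_top.ne
  have : ∀ k, IsFiniteMeasure (ν k) := fun k => isFiniteMeasure_of_le _ (hν k)
  choose P₀ hP₀ using fun k => exists_forall_lintegral_edist_le (V.restrict (K k ×ˢ univ)) Prod.snd
  have hx_ex : ∀ k, ∃ x : Euc n, (K k).Nonempty → x ∈ K k := fun k =>
    (K k).eq_empty_or_nonempty.elim (fun h => ⟨0, fun h' => absurd h h'.ne_empty⟩)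
      fun h => ⟨h.some, fun _ => h.some_mem⟩
  choose x hx using hx_ex
  refine ⟨Measure.sum fun k => ν k univ • Measure.dirac (x k, P₀ k),
    ⟨fun k => (ν k univ).toNNReal, x, P₀, hx, fun k hk => ?_, by simp⟩,
    fun U hU => ofReal_BL_sum_dirac_le hδ hU hK hν hsum hx hP₀⟩
  have : ν k = 0 := le_antisymm (by simpa [hk] using hν k) (Measure.zero_le _)
  simp [this]

end PointCloud

theorem statement_12_general {n d : ℕ} (hdn : d < n)
    (Ω : Set (Euc n)) (hΩ : IsOpen Ω)
    (V : Measure (Euc n × Gr n d))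
    (hVΩ : V {p : Euc n × Gr n d | p.1 ∉ Ω} = 0)
    (hVloc : IsLocallyFiniteMeasure V)
    {ι : Type} [Countable ι] (K : ℕ → ι → Set (Euc n))
    (hcover : ∀ i, ⋃ k, K i k = Ω)
    (δ : ℕ → ℝ)
    (hδ : ∀ i k, EMetric.diam (K i k) ≤ ENNReal.ofReal (δ i)) :
    ∃ W : ℕ → Measure (Euc n × Gr n d),
      (∀ i, IsPointCloudOn (K i) (W i) ∨ IsVolumetricOn (K i) (W i)) ∧
      ∀ i : ℕ, ∀ U : Set (Euc n), IsOpen U → U ⊆ Ω →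
        ENNReal.ofReal (BL U V (W i))
          ≤ ENNReal.ofReal (δ i) * mass V (Metric.thickening (δ i) U)
            + ∑' k : ι, ⨅ P : Gr n d,
                ∫⁻ p in (Metric.thickening (δ i) U ∩ K i k) ×ˢ (univ : Set (Gr n d)),
                  ENNReal.ofReal ‖Gr.op P - Gr.op p.2‖ ∂V := by
  rcases Ω.eq_empty_or_nonempty with rfl | hΩne
  · have hV : V = 0 := Measure.measure_univ_eq_zero.mp (by simpa using hVΩ)
    have hK : ∀ i k, K i k = ∅ := fun i k => subset_empty_iff.mp (hcover i ▸ subset_iUnion (K i) k)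
    have := Gr.nonempty_of_le hdn.le
    refine ⟨fun _ => 0, fun i => Or.inl ⟨0, 0, fun _ => Classical.arbitrary _,
      fun k h => absurd (hK i k) h.ne_empty, fun _ _ => rfl, by simp⟩,
      fun i U _ _ => ofReal_BL_le fun φ _ _ _ => by simp [hV]⟩
  have hV : ∀ i, ∀ᵐ p ∂V, p.1 ∈ ⋃ k, K i k := fun i => by
    rw [hcover i]; exact ae_iff.mpr (by simpa using hVΩ)
  have : Nontrivial (Euc n) :=
    Module.nontrivial_of_finrank_pos (R := ℝ) (by rw [finrank_euclideanSpace_fin]; omega)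
  have hδpos i := pos_of_iUnion_eq_of_ediam_le hΩ hΩne (hcover i) (hδ i)
  choose W hW hbound using fun i =>
    exists_isPointCloudOn_BL_le hdn.le (K i) (hV i) (hδpos i) (hδ i)
  exact ⟨W, fun i => Or.inl (hW i), fun i U hU _ => hbound i U hU⟩

/-- Lemma `lemma:approx-local-estimate`. Given a `d`-varifold `V` in `Ω`
and meshes `𝒦_i` of `Ω` of sizes `δ_i`, there exist discrete (point cloud or volumetric)
varifolds `V_i` built on the meshes such that for every open `U ⊆ Ω`,
`Δ^{1,1}_U(V, V_i) ≤ δ_i ‖V‖(U^{δ_i}) + Σ_K min_P ∫_{(U^{δ_i}∩K)×G} ‖P - S‖ dV`. -/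
theorem statement_12 {n d : ℕ} (hd : 1 ≤ d) (hdn : d < n)
    (Ω : Set (Euc n)) (hΩ : IsOpen Ω)
    (V : Measure (Euc n × Gr n d))
    (hVΩ : V {p : Euc n × Gr n d | p.1 ∉ Ω} = 0)
    (hVloc : IsLocallyFiniteMeasure V)
    {ι : Type} [Countable ι] (K : ℕ → ι → Set (Euc n))
    (hdisj : ∀ i, Pairwise (Function.onFun Disjoint (K i)))
    (hcover : ∀ i, ⋃ k, K i k = Ω)
    (hlocfin : ∀ i, ∀ B : Set (Euc n), Bornology.IsBounded B →
        {k : ι | (K i k ∩ B).Nonempty}.Finite)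
    (δ : ℕ → ℝ) (hδnn : ∀ i, 0 ≤ δ i)
    (hδ : ∀ i k, EMetric.diam (K i k) ≤ ENNReal.ofReal (δ i)) :
    ∃ W : ℕ → Measure (Euc n × Gr n d),
      (∀ i, IsPointCloudOn (K i) (W i) ∨ IsVolumetricOn (K i) (W i)) ∧
      ∀ i : ℕ, ∀ U : Set (Euc n), IsOpen U → U ⊆ Ω →
        ENNReal.ofReal (BL U V (W i))
          ≤ ENNReal.ofReal (δ i) * mass V (Metric.thickening (δ i) U)
            + ∑' k : ι, ⨅ P : Gr n d,
                ∫⁻ p in (Metric.thickening (δ i) U ∩ K i k) ×ˢ (univ : Set (Gr n d)),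
                  ENNReal.ofReal ‖Gr.op P - Gr.op p.2‖ ∂V :=
  statement_12_general hdn Ω hΩ V hVΩ hVloc K hcover δ hδ

end VarifoldPaper
end
end
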